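/- Let m, n be coprime natural numbers and G a polycyclic group satisfying aᵐbᵐ = bᵐaᵐ and aⁿbⁿ = bⁿaⁿ for all a, b ∈ G. Then G is abelian. -/

import Mathlib

/-- A group is polycyclic iff it is solvable and every subgroup is finitely
generated (a standard characterization of polycyclic groups). -/
def IsPolycyclic (G : Type*) [Group G] : Prop :=
  IsSolvable G ∧ ∀ H : Subgroup G, H.FG

/-!
The subgroups `A = ⟨gᵐ⟩` and `B = ⟨gⁿ⟩` are normal and abelian, and `G = AB` because
`g = (gᵐ)ᵘ (gⁿ)ᵛ` for `um + vn = 1`. Every commutator `⁅a, b⁆` with `a ∈ A`, `b ∈ B` lies in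
`A ∩ B`, which commutes with both `A` and `B` and is therefore central; hence `G / Z(G)` is
abelian, i.e. `G` is nilpotent of class at most two. In such a group
`⁅a, b⁆ ^ (k ^ 2) = ⁅aᵏ, bᵏ⁆`, which is trivial for `k = m` and `k = n`, and `m²`, `n²` are coprime.
-/

open Subgroup
open scoped commutatorElement

section

variable {G : Type*} [Group G]

variable (G) in
def powerSubgroup (k : ℕ) : Subgroup G :=
  closure (Set.range fun g : G => g ^ k)

theorem pow_mem_powerSubgroup (g : G) (k : ℕ) : g ^ k ∈ powerSubgroup G k :=
  subset_closure ⟨g, rfl⟩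

instance powerSubgroup_normal (k : ℕ) : (powerSubgroup G k).Normal := by
  rw [← normalizer_eq_top_iff, eq_top_iff]
  refine le_trans (fun g _ => ?_) (normalizer_le_normalizer_closure _)
  have hcomm : MulAut.conj g ∘ (fun x : G => x ^ k) = (fun x : G => x ^ k) ∘ MulAut.conj g :=
    funext fun x => map_pow (MulAut.conj g) x k
  rw [mem_normalizer_iff_conj_image_eq, ← Set.range_comp, hcomm,
    (MulAut.conj g).surjective.range_comp]

theorem isMulCommutative_powerSubgroup {k : ℕ} (h : ∀ a b : G, a ^ k * b ^ k = b ^ k * a ^ k) :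
    IsMulCommutative (powerSubgroup G k) :=
  isMulCommutative_closure (by rintro _ ⟨a, rfl⟩ _ ⟨b, rfl⟩; exact h a b)

theorem powerSubgroup_sup_eq_top {m n : ℕ} (hmn : m.Coprime n) :
    powerSubgroup G m ⊔ powerSubgroup G n = ⊤ := by
  refine eq_top_iff.2 fun g _ => ?_
  have hg : (g ^ m) ^ m.gcdA n * (g ^ n) ^ m.gcdB n = g := by
    rw [← zpow_natCast, ← zpow_natCast, ← zpow_mul, ← zpow_mul, ← zpow_add,
      ← Nat.gcd_eq_gcd_ab, hmn.gcd_eq_one, Nat.cast_one, zpow_one]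
  rw [← hg]
  exact mul_mem_sup (zpow_mem (pow_mem_powerSubgroup g m) _)
    (zpow_mem (pow_mem_powerSubgroup g n) _)

theorem commute_mk'_iff {N : Subgroup G} [N.Normal] {x y : G} :
    Commute (QuotientGroup.mk' N x) (QuotientGroup.mk' N y) ↔ ⁅x, y⁆ ∈ N := by
  rw [← commutatorElement_eq_one_iff_commute, ← map_commutatorElement, QuotientGroup.mk'_apply,
    QuotientGroup.eq_one_iff]

theorem inf_le_center_of_sup_eq_top {A B : Subgroup G} [B.Normal]
    [IsMulCommutative A] [IsMulCommutative B] (hAB : A ⊔ B = ⊤) : A ⊓ B ≤ center G := by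
  rintro z ⟨hzA, hzB⟩
  rw [mem_center_iff]
  intro g
  obtain ⟨a, ha, b, hb, rfl⟩ := mem_sup_of_normal_right.1 (hAB ▸ mem_top g)
  exact (Commute.mul_left (setLike_mul_comm ha hzA) (setLike_mul_comm hb hzB) :)

theorem commutatorElement_mem_center_of_sup_eq_top {A B : Subgroup G} [A.Normal] [B.Normal]
    [IsMulCommutative A] [IsMulCommutative B] (hAB : A ⊔ B = ⊤) (x y : G) :
    ⁅x, y⁆ ∈ center G := by
  have hAB_center : ∀ a ∈ A, ∀ b ∈ B, ⁅a, b⁆ ∈ center G := fun a ha b hb =>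
    inf_le_center_of_sup_eq_top hAB (commutator_le_inf A B (commutator_mem_commutator ha hb))
  let π := QuotientGroup.mk' (center G)
  rw [← commute_mk'_iff]
  obtain ⟨a₁, ha₁, b₁, hb₁, rfl⟩ := mem_sup_of_normal_right.1 (hAB ▸ mem_top x)
  obtain ⟨a₂, ha₂, b₂, hb₂, rfl⟩ := mem_sup_of_normal_right.1 (hAB ▸ mem_top y)
  have hBA : ⁅b₁, a₂⁆ ∈ center G := by
    rw [← commutatorElement_inv]; exact inv_mem (hAB_center a₂ ha₂ b₁ hb₁)
  simp only [map_mul]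
  exact ((Commute.map (setLike_mul_comm ha₁ ha₂) π).mul_right
      (commute_mk'_iff.2 (hAB_center a₁ ha₁ b₂ hb₂))).mul_left
    ((commute_mk'_iff.2 hBA).mul_right (Commute.map (setLike_mul_comm hb₁ hb₂) π))

theorem commutatorElement_pow_right_of_mem_center {x y : G} (h : ⁅x, y⁆ ∈ center G) (k : ℕ) :
    ⁅x, y ^ k⁆ = ⁅x, y⁆ ^ k := by
  have hc : Commute ⁅x, y⁆ y := (mem_center_iff.1 h y).symm
  apply mul_right_cancel (b := y ^ k)
  rw [← conj_eq_commutatorElement_mul, map_pow, conj_eq_commutatorElement_mul, hc.mul_pow]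

theorem commutatorElement_pow_left_of_mem_center {x y : G} (h : ⁅x, y⁆ ∈ center G) (k : ℕ) :
    ⁅x ^ k, y⁆ = ⁅x, y⁆ ^ k := by
  have h' : ⁅y, x⁆ ∈ center G := by rw [← commutatorElement_inv]; exact inv_mem h
  rw [← commutatorElement_inv, commutatorElement_pow_right_of_mem_center h', ← inv_pow,
    commutatorElement_inv]

theorem commutatorElement_pow_pow (h : ∀ x y : G, ⁅x, y⁆ ∈ center G) (x y : G) (k : ℕ) :
    ⁅x ^ k, y ^ k⁆ = ⁅x, y⁆ ^ (k ^ 2) := by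
  rw [commutatorElement_pow_left_of_mem_center (h _ _),
    commutatorElement_pow_right_of_mem_center (h _ _), ← pow_mul, sq]

end

theorem polycyclic_abelian_of_coprime_powers_commute_general (G : Type*) [Group G]
    (m n : ℕ) (hmn : Nat.Coprime m n)
    (hm : ∀ a b : G, a ^ m * b ^ m = b ^ m * a ^ m)
    (hn : ∀ a b : G, a ^ n * b ^ n = b ^ n * a ^ n) :
    ∀ a b : G, a * b = b * a := by
  have := isMulCommutative_powerSubgroup hm
  have := isMulCommutative_powerSubgroup hn
  have hcenter :=
    commutatorElement_mem_center_of_sup_eq_top (powerSubgroup_sup_eq_top (G := G) hmn)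
  have hpow {k : ℕ} {a b : G} (h : a ^ k * b ^ k = b ^ k * a ^ k) : ⁅a, b⁆ ^ (k ^ 2) = 1 := by
    rwa [← commutatorElement_pow_pow hcenter, commutatorElement_eq_one_iff_mul_comm]
  intro a b
  rw [← commutatorElement_eq_one_iff_mul_comm,
    ← pow_eq_one_iff_of_coprime (Nat.Coprime.pow 2 2 hmn)]
  exact ⟨hpow (hm a b), hpow (hn a b)⟩

theorem polycyclic_abelian_of_coprime_powers_commute (G : Type*) [Group G]
    (hpoly : IsPolycyclic G)
    (m n : ℕ) (hmn : Nat.Coprime m n)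
    (hm : ∀ a b : G, a ^ m * b ^ m = b ^ m * a ^ m)
    (hn : ∀ a b : G, a ^ n * b ^ n = b ^ n * a ^ n) :
    ∀ a b : G, a * b = b * a :=
  polycyclic_abelian_of_coprime_powers_commute_general G m n hmn hm hn
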